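/- arXiv:1205.0825 — 5 statements merged into one kernel-verified Lean document; each statement's English description precedes it below -/
import Mathlib

section
/- For a 2-component link given by Lipschitz curves γ₁, γ₂: S¹ → ℝ³ with disjoint images, the Möbius cross energy satisfies E(γ₁,γ₂) ≥ 4π·|lk(γ₁,γ₂)|, where lk denotes the linking number. -/
/-!
Pointwise, the Gauss integrand is dominated by the Möbius energy density: its numerator is the
triple product `det (γ₁', γ₂', γ₁ - γ₂)`, and by Cauchy–Schwarz together with Lagrange's identity
`|a × b|² = |a|²|b|² - ⟪a, b⟫²` one has Hadamard's inequality `|det (a, b, c)| ≤ |a| |b| |c|`.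
Integrating this bound gives the theorem. The only analytic input is integrability of the energy
density, which holds because a Lipschitz curve has derivative bounded by its Lipschitz constant
and two disjoint compact arcs stay a positive distance apart.
-/

open Real MeasureTheory
open scoped RealInnerProductSpace Matrix

theorem norm_integral_integral_le_of_norm_le {α β E : Type*} [MeasurableSpace α]
    [MeasurableSpace β] [NormedAddCommGroup E] [NormedSpace ℝ E] {μ : Measure α} {ν : Measure β}
    [SFinite μ] [SFinite ν] {f : α → β → E} {g : α → β → ℝ}
    (hg : Integrable (Function.uncurry g) (μ.prod ν)) (hfg : ∀ x y, ‖f x y‖ ≤ g x y) :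
    ‖∫ x, ∫ y, f x y ∂ν ∂μ‖ ≤ ∫ x, ∫ y, g x y ∂ν ∂μ :=
  norm_integral_le_of_norm_le hg.integral_prod_left <| hg.prod_right_ae.mono fun x hx =>
    norm_integral_le_of_norm_le hx (.of_forall (hfg x))

theorem exists_pos_forall_le_norm_sub {X E : Type*} [TopologicalSpace X] [NormedAddCommGroup E]
    {γ₁ γ₂ : X → E} {s t : Set X} (hs : IsCompact s) (ht : IsCompact t)
    (h₁ : ContinuousOn γ₁ s) (h₂ : ContinuousOn γ₂ t) (hdisj : ∀ x ∈ s, ∀ y ∈ t, γ₁ x ≠ γ₂ y) :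
    ∃ δ > 0, ∀ x ∈ s, ∀ y ∈ t, δ ≤ ‖γ₁ x - γ₂ y‖ := by
  have hdisj' : Disjoint (γ₁ '' s) (γ₂ '' t) := Set.disjoint_left.2 <| by
    rintro _ ⟨x, hx, rfl⟩ ⟨y, hy, hxy⟩
    exact hdisj x hx y hy hxy.symm
  obtain ⟨r, hr, hlt⟩ := Metric.exists_pos_forall_lt_edist (hs.image_of_continuousOn h₁)
    (ht.image_of_continuousOn h₂).isClosed hdisj'
  refine ⟨r, hr, fun x hx y hy => ?_⟩
  have := hlt _ (Set.mem_image_of_mem γ₁ hx) _ (Set.mem_image_of_mem γ₂ hy)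
  rw [edist_nndist, ENNReal.coe_lt_coe, ← NNReal.coe_lt_coe, coe_nndist, dist_eq_norm] at this
  exact this.le

namespace EuclideanSpace

theorem real_norm_sq_eq_dotProduct {n : Type*} [Fintype n] (x : EuclideanSpace ℝ n) :
    ‖x‖ ^ 2 = x.ofLp ⬝ᵥ x.ofLp := by
  rw [← real_inner_self_eq_norm_sq, inner_eq_star_dotProduct, star_trivial]

theorem norm_cross_le (b c : EuclideanSpace ℝ (Fin 3)) :
    ‖WithLp.toLp 2 (b.ofLp ⨯₃ c.ofLp)‖ ≤ ‖b‖ * ‖c‖ := by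
  refine le_of_sq_le_sq ?_ (by positivity)
  rw [mul_pow, real_norm_sq_eq_dotProduct, real_norm_sq_eq_dotProduct,
    real_norm_sq_eq_dotProduct, cross_dot_cross, dotProduct_comm c.ofLp b.ofLp]
  exact sub_le_self _ (mul_self_nonneg _)

theorem abs_det_le_norm_mul_norm_mul_norm (a b c : EuclideanSpace ℝ (Fin 3)) :
    |Matrix.det (Matrix.of fun i j => (![a, b, c] i) j)| ≤ ‖a‖ * ‖b‖ * ‖c‖ := by
  have htriple : Matrix.det (Matrix.of fun i j => (![a, b, c] i) j)
      = ⟪a, WithLp.toLp 2 (b.ofLp ⨯₃ c.ofLp)⟫ := by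
    rw [inner_eq_star_dotProduct, star_trivial, dotProduct_comm, triple_product_eq_det]
    congr 1
    ext i j
    fin_cases i <;> rfl
  rw [htriple, mul_assoc]
  exact (abs_real_inner_le_norm _ _).trans
    (mul_le_mul_of_nonneg_left (norm_cross_le b c) (norm_nonneg a))

theorem abs_det_div_norm_pow_three_le (a b c : EuclideanSpace ℝ (Fin 3)) :
    |Matrix.det (Matrix.of fun i j => (![a, b, c] i) j) / ‖c‖ ^ 3| ≤ ‖a‖ * ‖b‖ / ‖c‖ ^ 2 := by
  rcases eq_or_ne c 0 with rfl | hc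
  · simp
  have hc₀ : 0 < ‖c‖ := norm_pos_iff.2 hc
  rw [abs_div, abs_of_pos (pow_pos hc₀ 3), div_le_div_iff₀ (by positivity) (by positivity)]
  calc _ ≤ ‖a‖ * ‖b‖ * ‖c‖ * ‖c‖ ^ 2 := by gcongr; exact abs_det_le_norm_mul_norm_mul_norm a b c
    _ = ‖a‖ * ‖b‖ * ‖c‖ ^ 3 := by ring

end EuclideanSpace

section MoebiusEnergy

variable {E : Type*} [NormedAddCommGroup E] [NormedSpace ℝ E] [CompleteSpace E]

noncomputable def moebiusEnergyDensity (γ₁ γ₂ : ℝ → E) (s t : ℝ) : ℝ :=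
  ‖deriv γ₁ s‖ * ‖deriv γ₂ t‖ / ‖γ₁ s - γ₂ t‖ ^ 2

theorem integrable_moebiusEnergyDensity {γ₁ γ₂ : ℝ → E} {K₁ K₂ : NNReal} {a b c d : ℝ}
    (h₁ : LipschitzWith K₁ γ₁) (h₂ : LipschitzWith K₂ γ₂)
    (hdisj : ∀ s ∈ Set.Icc a b, ∀ t ∈ Set.Icc c d, γ₁ s ≠ γ₂ t) :
    Integrable (Function.uncurry (moebiusEnergyDensity γ₁ γ₂))
      ((volume.restrict (Set.Ioc a b)).prod (volume.restrict (Set.Ioc c d))) := by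
  obtain ⟨δ, hδ, hδle⟩ := exists_pos_forall_le_norm_sub isCompact_Icc isCompact_Icc
    h₁.continuous.continuousOn h₂.continuous.continuousOn hdisj
  rw [Measure.prod_restrict]
  refine Measure.integrableOn_of_bounded (M := K₁ * K₂ / δ ^ 2) ?_ ?_ ?_
  · simp [Measure.prod_prod, ENNReal.mul_eq_top]
  · have hdist : Continuous fun p : ℝ × ℝ => ‖γ₁ p.1 - γ₂ p.2‖ ^ 2 := by
      have := h₁.continuous
      have := h₂.continuous
      fun_prop
    exact ((((stronglyMeasurable_deriv γ₁).norm.measurable.comp measurable_fst).mul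
      ((stronglyMeasurable_deriv γ₂).norm.measurable.comp measurable_snd)).div
      hdist.measurable).aestronglyMeasurable
  · refine (ae_restrict_iff' (measurableSet_Ioc.prod measurableSet_Ioc)).2
      (.of_forall fun ⟨s, t⟩ ⟨hs, ht⟩ => ?_)
    rw [Function.uncurry_apply_pair, moebiusEnergyDensity, Real.norm_of_nonneg (by positivity)]
    exact div_le_div₀ (by positivity)
      (mul_le_mul (norm_deriv_le_of_lipschitz h₁) (norm_deriv_le_of_lipschitz h₂)
        (norm_nonneg _) K₁.coe_nonneg) (by positivity)
      (pow_le_pow_left₀ hδ.le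
        (hδle s (Set.Ioc_subset_Icc_self hs) t (Set.Ioc_subset_Icc_self ht)) 2)

end MoebiusEnergy

theorem moebius_energy_ge_four_pi_linking_general
    (γ₁ γ₂ : ℝ → EuclideanSpace ℝ (Fin 3)) (K₁ K₂ : NNReal)
    (h₁ : LipschitzWith K₁ γ₁) (h₂ : LipschitzWith K₂ γ₂)
    (hdisj : ∀ s t, γ₁ s ≠ γ₂ t) :
    4 * π * |(1 / (4 * π)) * ∫ s in (0:ℝ)..(2 * π), ∫ t in (0:ℝ)..(2 * π),
        Matrix.det (Matrix.of fun i j =>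
          (![deriv γ₁ s, deriv γ₂ t, γ₁ s - γ₂ t] i) j) / ‖γ₁ s - γ₂ t‖ ^ 3|
      ≤ ∫ s in (0:ℝ)..(2 * π), ∫ t in (0:ℝ)..(2 * π),
          ‖deriv γ₁ s‖ * ‖deriv γ₂ t‖ / ‖γ₁ s - γ₂ t‖ ^ 2 := by
  have h2π : 0 ≤ 2 * π := by positivity
  rw [abs_mul, abs_of_pos (by positivity : 0 < 1 / (4 * π)), ← mul_assoc,
    mul_one_div_cancel (by positivity), one_mul]
  simp_rw [intervalIntegral.integral_of_le h2π, ← Real.norm_eq_abs]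
  refine norm_integral_integral_le_of_norm_le
    (integrable_moebiusEnergyDensity h₁ h₂ fun s _ t _ => hdisj s t) fun s t => ?_
  exact EuclideanSpace.abs_det_div_norm_pow_three_le (deriv γ₁ s) (deriv γ₂ t) (γ₁ s - γ₂ t)

/-- The Möbius cross energy of a 2-component link in ℝ³ is at least `4π |lk|`,
where the linking number is given by the Gauss integral. -/
theorem moebius_energy_ge_four_pi_linking
    (γ₁ γ₂ : ℝ → EuclideanSpace ℝ (Fin 3)) (K₁ K₂ : NNReal)
    (h₁ : LipschitzWith K₁ γ₁) (h₂ : LipschitzWith K₂ γ₂)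
    (hp₁ : Function.Periodic γ₁ (2 * π)) (hp₂ : Function.Periodic γ₂ (2 * π))
    (hdisj : ∀ s t, γ₁ s ≠ γ₂ t) :
    4 * π * |(1 / (4 * π)) * ∫ s in (0:ℝ)..(2 * π), ∫ t in (0:ℝ)..(2 * π),
        Matrix.det (Matrix.of fun i j =>
          (![deriv γ₁ s, deriv γ₂ t, γ₁ s - γ₂ t] i) j) / ‖γ₁ s - γ₂ t‖ ^ 3|
      ≤ ∫ s in (0:ℝ)..(2 * π), ∫ t in (0:ℝ)..(2 * π),
          ‖deriv γ₁ s‖ * ‖deriv γ₂ t‖ / ‖γ₁ s - γ₂ t‖ ^ 2 :=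
  moebius_energy_ge_four_pi_linking_general γ₁ γ₂ K₁ K₂ h₁ h₂ hdisj
end

section
/- Let γ₁, γ₂: S¹ → ℝ⁴ be Lipschitz curves with disjoint images and let g(s,t) = (γ₁(s)-γ₂(t))/|γ₁(s)-γ₂(t)| be the Gauss map. Then for almost every (s,t), the Jacobian of g satisfies |Jac g|(s,t) ≤ |γ₁'(s)||γ₂'(t)| / |γ₁(s)-γ₂(t)|². -/
/-!
Differentiating `g = normalize (γ₁ s - γ₂ t)` in `s` gives `|x|⁻¹` times the projection of
`γ₁'(s)` onto `x^⊥`, where `x = γ₁(s) - γ₂(t)`; likewise in `t` with `-γ₂'(t)`. Both partial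
derivatives are therefore bounded by `|γ₁'(s)|/|x|` and `|γ₂'(t)|/|x|`, and the Jacobian is at most
their product. By Rademacher's theorem this holds wherever `γ₁` and `γ₂` are differentiable,
which is almost everywhere.
-/

open Real MeasureTheory
open scoped RealInnerProductSpace

variable {F : Type*} [NormedAddCommGroup F] [InnerProductSpace ℝ F]

theorem HasDerivAt.norm {f : ℝ → F} {f' : F} {x : ℝ} (hf : HasDerivAt f f' x) (h0 : f x ≠ 0) :
    HasDerivAt (fun y => ‖f y‖) (⟪f x, f'⟫ / ‖f x‖) x := by
  have h := hf.norm_sq.sqrt (by positivity)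
  simp only [sqrt_sq (norm_nonneg _)] at h
  convert h using 1
  field_simp

theorem HasDerivAt.normalize {f : ℝ → F} {f' : F} {x : ℝ} (hf : HasDerivAt f f' x)
    (h0 : f x ≠ 0) :
    HasDerivAt (fun y => NormedSpace.normalize (f y))
      (‖f x‖⁻¹ • (ℝ ∙ f x)ᗮ.starProjection f') x := by
  have hnorm : ‖f x‖ ≠ 0 := norm_ne_zero_iff.mpr h0
  convert (hf.norm h0).inv hnorm |>.smul hf using 1
  · rfl
  rw [Submodule.starProjection_orthogonal_val, Submodule.starProjection_singleton]
  simp only [RCLike.ofReal_real_eq_id, id_eq, Pi.inv_apply]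
  match_scalars <;> field_simp

theorem norm_inv_norm_smul_starProjection_le (x u : F) :
    ‖‖x‖⁻¹ • (ℝ ∙ x)ᗮ.starProjection u‖ ≤ ‖u‖ / ‖x‖ := by
  rw [norm_smul, norm_inv, norm_norm, inv_mul_eq_div]
  gcongr
  exact Submodule.norm_starProjection_apply_le _ u

theorem sqrt_norm_sq_mul_norm_sq_sub_inner_sq_le (a b : F) :
    √(‖a‖ ^ 2 * ‖b‖ ^ 2 - ⟪a, b⟫ ^ 2) ≤ ‖a‖ * ‖b‖ := by
  rw [sqrt_le_left (by positivity)]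
  nlinarith [sq_nonneg ⟪a, b⟫]

theorem gauss_map_jacobian_bound_general
    (γ₁ γ₂ : ℝ → EuclideanSpace ℝ (Fin 4)) (K₁ K₂ : NNReal)
    (h₁ : LipschitzWith K₁ γ₁) (h₂ : LipschitzWith K₂ γ₂)
    (hdisj : ∀ s t, γ₁ s ≠ γ₂ t)
    (g : ℝ × ℝ → EuclideanSpace ℝ (Fin 4))
    (hg : ∀ p : ℝ × ℝ, g p = ‖γ₁ p.1 - γ₂ p.2‖⁻¹ • (γ₁ p.1 - γ₂ p.2)) :
    ∀ᵐ p : ℝ × ℝ,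
      Real.sqrt (‖deriv (fun s => g (s, p.2)) p.1‖ ^ 2 * ‖deriv (fun t => g (p.1, t)) p.2‖ ^ 2
          - ⟪deriv (fun s => g (s, p.2)) p.1, deriv (fun t => g (p.1, t)) p.2⟫ ^ 2)
        ≤ ‖deriv γ₁ p.1‖ * ‖deriv γ₂ p.2‖ / ‖γ₁ p.1 - γ₂ p.2‖ ^ 2 := by
  obtain rfl : g = fun p => NormedSpace.normalize (γ₁ p.1 - γ₂ p.2) := funext hg
  filter_upwards [Measure.quasiMeasurePreserving_fst.ae h₁.ae_differentiableAt,
    Measure.quasiMeasurePreserving_snd.ae h₂.ae_differentiableAt] with ⟨s, t⟩ hs ht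
  have hx : γ₁ s - γ₂ t ≠ 0 := sub_ne_zero.mpr (hdisj s t)
  rw [((hs.hasDerivAt.sub_const (γ₂ t)).normalize hx).deriv,
    ((ht.hasDerivAt.const_sub (γ₁ s)).normalize hx).deriv]
  calc _ ≤ _ := sqrt_norm_sq_mul_norm_sq_sub_inner_sq_le _ _
    _ ≤ ‖deriv γ₁ s‖ / ‖γ₁ s - γ₂ t‖ * (‖deriv γ₂ t‖ / ‖γ₁ s - γ₂ t‖) := by
      gcongr
      · exact norm_inv_norm_smul_starProjection_le _ _
      · simpa using norm_inv_norm_smul_starProjection_le (γ₁ s - γ₂ t) (-deriv γ₂ t)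
    _ = _ := by rw [div_mul_div_comm, sq]

/-- For the Gauss map `g(s,t) = (γ₁(s) - γ₂(t))/|γ₁(s) - γ₂(t)|` of a link in ℝ⁴,
for almost every `(s,t)` the Jacobian satisfies
`|Jac g|(s,t) ≤ |γ₁'(s)||γ₂'(t)|/|γ₁(s)-γ₂(t)|²`. -/
theorem gauss_map_jacobian_bound
    (γ₁ γ₂ : ℝ → EuclideanSpace ℝ (Fin 4)) (K₁ K₂ : NNReal)
    (h₁ : LipschitzWith K₁ γ₁) (h₂ : LipschitzWith K₂ γ₂)
    (hp₁ : Function.Periodic γ₁ (2 * π)) (hp₂ : Function.Periodic γ₂ (2 * π))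
    (hdisj : ∀ s t, γ₁ s ≠ γ₂ t)
    (g : ℝ × ℝ → EuclideanSpace ℝ (Fin 4))
    (hg : ∀ p : ℝ × ℝ, g p = ‖γ₁ p.1 - γ₂ p.2‖⁻¹ • (γ₁ p.1 - γ₂ p.2)) :
    ∀ᵐ p : ℝ × ℝ,
      Real.sqrt (‖deriv (fun s => g (s, p.2)) p.1‖ ^ 2 * ‖deriv (fun t => g (p.1, t)) p.2‖ ^ 2
          - ⟪deriv (fun s => g (s, p.2)) p.1, deriv (fun t => g (p.1, t)) p.2⟫ ^ 2)
        ≤ ‖deriv γ₁ p.1‖ * ‖deriv γ₂ p.2‖ / ‖γ₁ p.1 - γ₂ p.2‖ ^ 2 :=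
  gauss_map_jacobian_bound_general γ₁ γ₂ K₁ K₂ h₁ h₂ hdisj g hg
end

section
/- Let γ₁, γ₂: S¹ → S³ be a Lipschitz link, v ∈ B⁴, z ∈ (0,1), and define a(v,z) = 1 + (1−|v|²)(2z−1)/((1−|v|²+z)(1−z)), b(v,z) = (2z−1)/((1−|v|²+z)(1−z)), c(v) = v/(1−|v|²). Then for all s,t: |F_v(γ₁(s)) − D_{c(v),a(v,z)}(F_v(γ₂(t)))|² = a(v,z)·|F_v(γ₁(s)) − F_v(γ₂(t))|² + b(v,z)², where D_{w,λ}(x) = λ(x−w)+w and F_v(x)=(x−v)/|x−v|². -/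
/-!
Every point of the unit sphere is sent by `F_v` to the sphere of radius `1/(1-|v|²)` about
`c(v)`. For two points `X, Y` on a sphere of radius `r` about `p`, expanding the square gives
`|X - D_{p,a}(Y)|² = a|X - Y|² + (1-a)²r²`, and here `(1-a)²r² = b²` because
`1 - a = -(1-|v|²) b`.
-/

variable {E : Type*} [NormedAddCommGroup E] [InnerProductSpace ℝ E]

theorem norm_sub_dilation_sq_of_mem_sphere {X Y p : E} {r : ℝ}
    (hX : ‖X - p‖ ^ 2 = r ^ 2) (hY : ‖Y - p‖ ^ 2 = r ^ 2) (a : ℝ) :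
    ‖X - (a • (Y - p) + p)‖ ^ 2 = a * ‖X - Y‖ ^ 2 + (1 - a) ^ 2 * r ^ 2 := by
  have hXY : X - Y = (X - p) - (Y - p) := by abel
  have hXD : X - (a • (Y - p) + p) = (X - p) - a • (Y - p) := by module
  rw [hXD, hXY, norm_sub_sq_real (X - p), norm_sub_sq_real (X - p), real_inner_smul_right, norm_smul,
    Real.norm_eq_abs, mul_pow, sq_abs, hX, hY]
  ring

theorem norm_inversion_sub_center_sq {u v : E} (hu : ‖u‖ = 1) (hv : ‖v‖ ≠ 1) :
    ‖(‖u - v‖ ^ 2)⁻¹ • (u - v) - (1 - ‖v‖ ^ 2)⁻¹ • v‖ ^ 2 = ((1 - ‖v‖ ^ 2)⁻¹) ^ 2 := by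
  have hk : 1 - ‖v‖ ^ 2 ≠ 0 := by
    intro h
    apply hv
    nlinarith [norm_nonneg v]
  have hd : ‖u - v‖ ≠ 0 := by
    refine norm_ne_zero_iff.mpr (sub_ne_zero.mpr ?_)
    rintro rfl
    exact hv hu
  have hinner : inner ℝ (u - v) v = ((1 - ‖v‖ ^ 2) - ‖u - v‖ ^ 2) / 2 := by
    rw [norm_sub_sq_real, hu, inner_sub_left, real_inner_self_eq_norm_sq]
    ring
  rw [norm_sub_sq_real, real_inner_smul_left, real_inner_smul_right, hinner, norm_smul,
    norm_smul, Real.norm_eq_abs, Real.norm_eq_abs, mul_pow, mul_pow, sq_abs, sq_abs]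
  field_simp
  ring

theorem canonical_family_distance_identity_general
    (γ₁ γ₂ : ℝ → EuclideanSpace ℝ (Fin 4))
    (hS₁ : ∀ s, ‖γ₁ s‖ = 1) (hS₂ : ∀ t, ‖γ₂ t‖ = 1)
    (v : EuclideanSpace ℝ (Fin 4)) (hv : ‖v‖ < 1)
    (z : ℝ)
    (F : EuclideanSpace ℝ (Fin 4) → EuclideanSpace ℝ (Fin 4))
    (hF : ∀ x, F x = (‖x - v‖ ^ 2)⁻¹ • (x - v))
    (a b : ℝ) (c : EuclideanSpace ℝ (Fin 4))
    (ha : a = 1 + (1 - ‖v‖ ^ 2) * (2 * z - 1) / ((1 - ‖v‖ ^ 2 + z) * (1 - z)))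
    (hb : b = (2 * z - 1) / ((1 - ‖v‖ ^ 2 + z) * (1 - z)))
    (hc : c = (1 - ‖v‖ ^ 2)⁻¹ • v) :
    ∀ s t, ‖F (γ₁ s) - (a • (F (γ₂ t) - c) + c)‖ ^ 2
        = a * ‖F (γ₁ s) - F (γ₂ t)‖ ^ 2 + b ^ 2 := by
  intro s t
  have hX := norm_inversion_sub_center_sq (hS₁ s) hv.ne
  have hY := norm_inversion_sub_center_sq (hS₂ t) hv.ne
  rw [← hc, ← hF] at hX hY
  have hk : 1 - ‖v‖ ^ 2 ≠ 0 := by nlinarith [norm_nonneg v]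
  have hab : 1 - a = -((1 - ‖v‖ ^ 2) * b) := by rw [ha, hb]; ring
  rw [norm_sub_dilation_sq_of_mem_sphere hX hY, hab]
  field_simp

/-- Distance identity for the canonical family: with
`a(v,z) = 1 + (1-|v|²)(2z-1)/((1-|v|²+z)(1-z))`, `b(v,z) = (2z-1)/((1-|v|²+z)(1-z))`,
`c(v) = v/(1-|v|²)`, dilation `D_{w,λ}(x) = λ(x-w)+w` and inversion `F_v(x) = (x-v)/|x-v|²`,
one has `|F_v(γ₁(s)) - D_{c(v),a(v,z)}(F_v(γ₂(t)))|² = a(v,z)|F_v(γ₁(s)) - F_v(γ₂(t))|² + b(v,z)²`. -/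
theorem canonical_family_distance_identity
    (γ₁ γ₂ : ℝ → EuclideanSpace ℝ (Fin 4)) (K₁ K₂ : NNReal)
    (h₁ : LipschitzWith K₁ γ₁) (h₂ : LipschitzWith K₂ γ₂)
    (hS₁ : ∀ s, ‖γ₁ s‖ = 1) (hS₂ : ∀ t, ‖γ₂ t‖ = 1)
    (v : EuclideanSpace ℝ (Fin 4)) (hv : ‖v‖ < 1)
    (z : ℝ) (hz : z ∈ Set.Ioo (0:ℝ) 1)
    (F : EuclideanSpace ℝ (Fin 4) → EuclideanSpace ℝ (Fin 4))
    (hF : ∀ x, F x = (‖x - v‖ ^ 2)⁻¹ • (x - v))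
    (a b : ℝ) (c : EuclideanSpace ℝ (Fin 4))
    (ha : a = 1 + (1 - ‖v‖ ^ 2) * (2 * z - 1) / ((1 - ‖v‖ ^ 2 + z) * (1 - z)))
    (hb : b = (2 * z - 1) / ((1 - ‖v‖ ^ 2 + z) * (1 - z)))
    (hc : c = (1 - ‖v‖ ^ 2)⁻¹ • v) :
    ∀ s t, ‖F (γ₁ s) - (a • (F (γ₂ t) - c) + c)‖ ^ 2
        = a * ‖F (γ₁ s) - F (γ₂ t)‖ ^ 2 + b ^ 2 :=
  canonical_family_distance_identity_general γ₁ γ₂ hS₁ hS₂ v hv z F hF a b c ha hb hc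
end

section
/- With the above notation, the Jacobian of the map g_{(v,z)}(s,t) = (F_v∘γ₁(s) − D_{c(v),a(v,z)}∘F_v∘γ₂(t)) / |F_v∘γ₁(s) − D_{c(v),a(v,z)}∘F_v∘γ₂(t)| satisfies, almost everywhere, |Jac g_{(v,z)}| ≤ a(v,z)·|(F_v∘γ₁)'(s)|·|(F_v∘γ₂)'(t)| / (a(v,z)·|F_v∘γ₁(s) − F_v∘γ₂(t)|² + b(v,z)²). -/
/-!
The Gauss map `(s, t) ↦ (α s - β t) / |α s - β t|` is the normalisation `u ↦ u / |u|` composed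
with `α s - β t`. The derivative of the normalisation at `u` is `1 / |u|` times the orthogonal
projection onto `u^⊥`, so the partial derivatives have norms at most `|α'| / |α - β|` and
`|β'| / |α - β|`, and the area element is at most their product.

For `α = F_v ∘ γ₁` and `β = D_{c(v),a} ∘ F_v ∘ γ₂`: `F_v` is Lipschitz away from `v`, so both
curves are differentiable almost everywhere (Rademacher), and `|β'| = a |(F_v ∘ γ₂)'|`. Since
`F_v` maps the unit sphere onto the sphere of radius `r = 1 / (1 - |v|²)` about `c(v)`, the
cosine rule gives `|α - β|² = a |F_v ∘ γ₁ - F_v ∘ γ₂|² + (r (a - 1))²`, and `r (a - 1) = b`.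
-/

open Real MeasureTheory
open scoped RealInnerProductSpace NNReal

variable {E : Type*} [NormedAddCommGroup E] [InnerProductSpace ℝ E]

theorem norm_sub_inner_div_smul_le (u w : E) : ‖w - (⟪u, w⟫ / ‖u‖ ^ 2) • u‖ ≤ ‖w‖ := by
  have h := (ℝ ∙ u)ᗮ.norm_starProjection_apply_le w
  rwa [Submodule.starProjection_orthogonal_val, Submodule.starProjection_singleton,
    RCLike.ofReal_real_eq_id, id] at h

theorem HasDerivAt.normalize_s11 {u : ℝ → E} {u' : E} {x : ℝ} (hu : HasDerivAt u u' x)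
    (h0 : u x ≠ 0) :
    HasDerivAt (fun y => ‖u y‖⁻¹ • u y) (‖u x‖⁻¹ • (u' - (⟪u x, u'⟫ / ‖u x‖ ^ 2) • u x)) x := by
  have hn : 0 < ‖u x‖ := norm_pos_iff.2 h0
  have hnorm : HasDerivAt (fun y => ‖u y‖) (⟪u x, u'⟫ / ‖u x‖) x := by
    convert hu.norm_sq.sqrt (by positivity) using 1
    · simp only [Real.sqrt_sq (norm_nonneg _)]
    · rw [Real.sqrt_sq (norm_nonneg _)]; field_simp
  refine ((hnorm.inv hn.ne').smul hu).congr_deriv ?_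
  rw [smul_sub, smul_smul, sub_eq_add_neg, ← neg_smul]
  congr 2
  field_simp

theorem norm_deriv_normalize_le {u : ℝ → E} {x : ℝ} (hu : DifferentiableAt ℝ u x)
    (h0 : u x ≠ 0) :
    ‖deriv (fun y => ‖u y‖⁻¹ • u y) x‖ ≤ ‖deriv u x‖ / ‖u x‖ := by
  rw [(hu.hasDerivAt.normalize_s11 h0).deriv, norm_smul, norm_inv, norm_norm, inv_mul_eq_div]
  gcongr
  exact norm_sub_inner_div_smul_le _ _

theorem sqrt_gram_le_norm_mul_norm (A B : E) :
    √(‖A‖ ^ 2 * ‖B‖ ^ 2 - ⟪A, B⟫ ^ 2) ≤ ‖A‖ * ‖B‖ :=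
  Real.sqrt_le_iff.2 ⟨by positivity, by nlinarith [sq_nonneg ⟪A, B⟫]⟩

noncomputable def gaussMap (α β : ℝ → E) (p : ℝ × ℝ) : E := ‖α p.1 - β p.2‖⁻¹ • (α p.1 - β p.2)

theorem gaussMap_jacobian_le {α β : ℝ → E} {s t : ℝ} (hα : DifferentiableAt ℝ α s)
    (hβ : DifferentiableAt ℝ β t) (hne : α s ≠ β t) :
    √(‖deriv (fun s => gaussMap α β (s, t)) s‖ ^ 2 * ‖deriv (fun t => gaussMap α β (s, t)) t‖ ^ 2
        - ⟪deriv (fun s => gaussMap α β (s, t)) s, deriv (fun t => gaussMap α β (s, t)) t⟫ ^ 2)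
      ≤ ‖deriv α s‖ * ‖deriv β t‖ / ‖α s - β t‖ ^ 2 := by
  have hne' : α s - β t ≠ 0 := sub_ne_zero.2 hne
  have h₁ : ‖deriv (fun s => gaussMap α β (s, t)) s‖ ≤ ‖deriv α s‖ / ‖α s - β t‖ := by
    simpa [gaussMap] using norm_deriv_normalize_le (u := fun s => α s - β t) (hα.sub_const _) hne'
  have h₂ : ‖deriv (fun t => gaussMap α β (s, t)) t‖ ≤ ‖deriv β t‖ / ‖α s - β t‖ := by
    simpa [gaussMap] using norm_deriv_normalize_le (u := fun t => α s - β t) (hβ.const_sub _) hne'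
  calc _ ≤ _ := sqrt_gram_le_norm_mul_norm _ _
    _ ≤ (‖deriv α s‖ / ‖α s - β t‖) * (‖deriv β t‖ / ‖α s - β t‖) :=
        mul_le_mul h₁ h₂ (norm_nonneg _) (by positivity)
    _ = _ := by ring

/-- The map `F_v` of the paper: `EuclideanGeometry.inversion v 1` followed by the translation
taking `v` to `0`. -/
noncomputable def inversionAt (v x : E) : E := (‖x - v‖ ^ 2)⁻¹ • (x - v)

theorem norm_inversionAt_sub_inversionAt {v x y : E} (hx : x ≠ v) (hy : y ≠ v) :
    ‖inversionAt v x - inversionAt v y‖ = ‖x - y‖ / (‖x - v‖ * ‖y - v‖) := by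
  have h := dist_div_norm_sq_smul (sub_ne_zero.2 hx) (sub_ne_zero.2 hy) 1
  simp only [one_div, inv_pow, one_pow, dist_eq_norm, sub_sub_sub_cancel_right] at h
  rw [inversionAt, inversionAt, h, inv_mul_eq_div]

theorem lipschitzOnWith_inversionAt (v : E) {δ : ℝ≥0} (hδ : 0 < δ) :
    LipschitzOnWith (δ ^ 2)⁻¹ (inversionAt v) {x | (δ : ℝ) ≤ ‖x - v‖} := by
  refine LipschitzOnWith.of_dist_le_mul fun x (hx : (δ : ℝ) ≤ _) y (hy : (δ : ℝ) ≤ _) => ?_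
  have hδ' : (0 : ℝ) < δ := hδ
  have hxv : x ≠ v := fun h => by simp [h] at hx; linarith
  have hyv : y ≠ v := fun h => by simp [h] at hy; linarith
  rw [dist_eq_norm, dist_eq_norm, norm_inversionAt_sub_inversionAt hxv hyv]
  calc ‖x - y‖ / (‖x - v‖ * ‖y - v‖) ≤ ‖x - y‖ / (δ * δ) := by gcongr
    _ = _ := by push_cast; ring

theorem inversionAt_injOn (v : E) : Set.InjOn (inversionAt v) {v}ᶜ := fun x hx y hy h => by
  have := norm_inversionAt_sub_inversionAt hx hy
  have hx' : x ≠ v := hx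
  have hy' : y ≠ v := hy
  rw [h, sub_self, norm_zero, eq_comm, div_eq_zero_iff] at this
  simpa [sub_eq_zero, hx', hy'] using this

theorem ae_differentiableAt_inversionAt_comp [FiniteDimensional ℝ E] {γ : ℝ → E} {K : ℝ≥0}
    (hγ : LipschitzWith K γ) (hS : ∀ s, ‖γ s‖ = 1) {v : E} (hv : ‖v‖ < 1) :
    ∀ᵐ s, DifferentiableAt ℝ (fun s => inversionAt v (γ s)) s := by
  set δ : ℝ≥0 := ⟨1 - ‖v‖, by linarith⟩
  have hfar (s : ℝ) : (δ : ℝ) ≤ ‖γ s - v‖ := by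
    show 1 - ‖v‖ ≤ _
    linarith [norm_sub_norm_le (γ s) v, hS s]
  have hlip := (lipschitzOnWith_inversionAt v (show 0 < δ from sub_pos.2 hv)).comp
    (hγ.lipschitzOnWith (s := Set.univ)) fun s _ => hfar s
  exact (lipschitzOnWith_univ.1 hlip).ae_differentiableAt

theorem norm_inversionAt_sub_center {v x : E} (hv : ‖v‖ < 1) (hx : ‖x‖ = 1) :
    ‖inversionAt v x - (1 - ‖v‖ ^ 2)⁻¹ • v‖ = (1 - ‖v‖ ^ 2)⁻¹ := by
  have hk : 0 < 1 - ‖v‖ ^ 2 := by nlinarith [norm_nonneg v]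
  have hxv : 0 < ‖x - v‖ := norm_pos_iff.2 (sub_ne_zero.2 fun h => by rw [h] at hx; linarith)
  have hrel : ‖x - v‖ ^ 2 = 1 - 2 * ⟪x - v, v⟫ - ‖v‖ ^ 2 := by
    rw [norm_sub_sq_real, inner_sub_left, real_inner_self_eq_norm_sq, hx]; ring
  refine (pow_left_inj₀ (norm_nonneg _) (by positivity) two_ne_zero).1 ?_
  rw [inversionAt, norm_sub_sq_real, norm_smul, norm_smul, real_inner_smul_left,
    real_inner_smul_right, Real.norm_of_nonneg (by positivity),
    Real.norm_of_nonneg (by positivity)]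
  field_simp
  linear_combination (‖v‖ ^ 2 - 1) * hrel

theorem norm_sub_smul_sq_of_norm_eq {P Q : E} {r : ℝ} (hP : ‖P‖ = r) (hQ : ‖Q‖ = r) (a : ℝ) :
    ‖P - a • Q‖ ^ 2 = a * ‖P - Q‖ ^ 2 + (r * (a - 1)) ^ 2 := by
  rw [norm_sub_sq_real, norm_sub_sq_real, norm_smul, real_inner_smul_right, hP, hQ,
    Real.norm_eq_abs, mul_pow, sq_abs]
  ring

theorem norm_inversionAt_sub_dilation_sq {v x y : E} (hv : ‖v‖ < 1) (hx : ‖x‖ = 1)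
    (hy : ‖y‖ = 1) (a : ℝ) :
    ‖inversionAt v x - (a • (inversionAt v y - (1 - ‖v‖ ^ 2)⁻¹ • v) + (1 - ‖v‖ ^ 2)⁻¹ • v)‖ ^ 2
      = a * ‖inversionAt v x - inversionAt v y‖ ^ 2 + ((1 - ‖v‖ ^ 2)⁻¹ * (a - 1)) ^ 2 := by
  rw [sub_add_eq_sub_sub_swap, norm_sub_smul_sq_of_norm_eq (norm_inversionAt_sub_center hv hx)
    (norm_inversionAt_sub_center hv hy), sub_sub_sub_cancel_right]

theorem canonical_dilation_pos {k z : ℝ} (hk : 0 < k) (hz : z ∈ Set.Ioo 0 1) :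
    0 < 1 + k * (2 * z - 1) / ((k + z) * (1 - z)) := by
  obtain ⟨hz₀, hz₁⟩ := hz
  have hd : 0 < (k + z) * (1 - z) := by nlinarith
  rw [one_add_div hd.ne']
  exact div_pos (by nlinarith) hd

/-- Jacobian bound for the canonical family Gauss map
`g_{(v,z)}(s,t) = (F_v∘γ₁(s) - D_{c(v),a(v,z)}∘F_v∘γ₂(t)) / |F_v∘γ₁(s) - D_{c(v),a(v,z)}∘F_v∘γ₂(t)|`:
almost everywhere,
`|Jac g_{(v,z)}| ≤ a(v,z)|(F_v∘γ₁)'(s)||(F_v∘γ₂)'(t)| / (a(v,z)|F_v∘γ₁(s) - F_v∘γ₂(t)|² + b(v,z)²)`. -/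
theorem canonical_family_jacobian_bound
    (γ₁ γ₂ : ℝ → EuclideanSpace ℝ (Fin 4)) (K₁ K₂ : NNReal)
    (h₁ : LipschitzWith K₁ γ₁) (h₂ : LipschitzWith K₂ γ₂)
    (hS₁ : ∀ s, ‖γ₁ s‖ = 1) (hS₂ : ∀ t, ‖γ₂ t‖ = 1)
    (hdisj : ∀ s t, γ₁ s ≠ γ₂ t)
    (v : EuclideanSpace ℝ (Fin 4)) (hv : ‖v‖ < 1)
    (z : ℝ) (hz : z ∈ Set.Ioo (0:ℝ) 1)
    (F : EuclideanSpace ℝ (Fin 4) → EuclideanSpace ℝ (Fin 4))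
    (hF : ∀ x, F x = (‖x - v‖ ^ 2)⁻¹ • (x - v))
    (a b : ℝ) (c : EuclideanSpace ℝ (Fin 4))
    (ha : a = 1 + (1 - ‖v‖ ^ 2) * (2 * z - 1) / ((1 - ‖v‖ ^ 2 + z) * (1 - z)))
    (hb : b = (2 * z - 1) / ((1 - ‖v‖ ^ 2 + z) * (1 - z)))
    (hc : c = (1 - ‖v‖ ^ 2)⁻¹ • v)
    (g : ℝ × ℝ → EuclideanSpace ℝ (Fin 4))
    (hg : ∀ p : ℝ × ℝ, g p =
      ‖F (γ₁ p.1) - (a • (F (γ₂ p.2) - c) + c)‖⁻¹ • (F (γ₁ p.1) - (a • (F (γ₂ p.2) - c) + c))) :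
    ∀ᵐ p : ℝ × ℝ,
      Real.sqrt (‖deriv (fun s => g (s, p.2)) p.1‖ ^ 2 * ‖deriv (fun t => g (p.1, t)) p.2‖ ^ 2
          - ⟪deriv (fun s => g (s, p.2)) p.1, deriv (fun t => g (p.1, t)) p.2⟫ ^ 2)
        ≤ a * ‖deriv (fun s => F (γ₁ s)) p.1‖ * ‖deriv (fun t => F (γ₂ t)) p.2‖
            / (a * ‖F (γ₁ p.1) - F (γ₂ p.2)‖ ^ 2 + b ^ 2) := by
  obtain rfl : F = inversionAt v := funext hF
  obtain rfl : g = gaussMap (fun s => inversionAt v (γ₁ s))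
      (fun t => a • (inversionAt v (γ₂ t) - c) + c) := funext hg
  have hk : 0 < 1 - ‖v‖ ^ 2 := by nlinarith [norm_nonneg v]
  have ha₀ : 0 < a := ha ▸ canonical_dilation_pos hk hz
  have hab : (1 - ‖v‖ ^ 2)⁻¹ * (a - 1) = b := by rw [ha, hb, add_sub_cancel_left]; field_simp
  filter_upwards [Measure.quasiMeasurePreserving_fst.tendsto_ae.eventually
      (ae_differentiableAt_inversionAt_comp h₁ hS₁ hv),
    Measure.quasiMeasurePreserving_snd.tendsto_ae.eventually
      (ae_differentiableAt_inversionAt_comp h₂ hS₂ hv)] with ⟨s, t⟩ hd₁ hd₂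
  dsimp only at hd₁ hd₂ ⊢
  have hx : γ₁ s ≠ v := ne_of_apply_ne norm (by rw [hS₁ s]; exact hv.ne')
  have hy : γ₂ t ≠ v := ne_of_apply_ne norm (by rw [hS₂ t]; exact hv.ne')
  have hsep : 0 < ‖inversionAt v (γ₁ s) - inversionAt v (γ₂ t)‖ :=
    norm_pos_iff.2 (sub_ne_zero.2 ((inversionAt_injOn v).ne hx hy (hdisj s t)))
  have hdist : ‖inversionAt v (γ₁ s) - (a • (inversionAt v (γ₂ t) - c) + c)‖ ^ 2
      = a * ‖inversionAt v (γ₁ s) - inversionAt v (γ₂ t)‖ ^ 2 + b ^ 2 := by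
    rw [hc, norm_inversionAt_sub_dilation_sq hv (hS₁ s) (hS₂ t), hab]
  have hne : inversionAt v (γ₁ s) ≠ a • (inversionAt v (γ₂ t) - c) + c := by
    rw [← sub_ne_zero, ← norm_ne_zero_iff, ← pow_ne_zero_iff two_ne_zero, hdist]
    exact (add_pos_of_pos_of_nonneg (mul_pos ha₀ (pow_pos hsep 2)) (sq_nonneg b)).ne'
  have hdβ : HasDerivAt (fun t => a • (inversionAt v (γ₂ t) - c) + c)
      (a • deriv (fun t => inversionAt v (γ₂ t)) t) t :=
    ((hd₂.hasDerivAt.sub_const c).const_smul a).add_const c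
  calc _ ≤ _ := gaussMap_jacobian_le hd₁ hdβ.differentiableAt hne
    _ = _ := by rw [hdβ.deriv, norm_smul, Real.norm_of_nonneg ha₀.le, hdist]; ring
end

section
/- Let p ∈ S³, z ∈ (0,1), and γ₁, γ₂: S¹ → S³∖{p} with disjoint images, and suppose |F_p∘γ₁(s) − F_p∘γ₂(t)|² ≥ c² for all s,t and some c > 0. Define g_{(p,z)}(s,t) = (F_p∘γ₁(s) − L_{(p,z)}∘γ₂(t))/|F_p∘γ₁(s) − L_{(p,z)}∘γ₂(t)|. Then for all (s,t), |⟨g_{(p,z)}(s,t), p⟩| ≤ |b(z)|/√(c² + b(z)²), and ⟨g_{(p,z)}, p⟩ has the same sign as b(z) = (2z−1)/(z(1−z)). In particular g_{(p,z)} takes values in the closed hemisphere {x ∈ S³ : ⟨x,p⟩ ≥ 0} when z ≥ 1/2 and in {⟨x,p⟩ ≤ 0} when z ≤ 1/2. -/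
open Real
open scoped RealInnerProductSpace

/-! Inversion `F` about `p` sends every point of the sphere `‖x‖ = ‖p‖` into the affine
hyperplane `⟪y, p⟫ = -1/2`. Hence `F(γ₁ s) - L(γ₂ t) = (F(γ₁ s) - F(γ₂ t)) + b • p` splits into a
part orthogonal to the unit vector `p` and the part `b • p`: its `p`-component is `b`, and its
squared length is at least `c² + b²`. Normalising divides `b` by a length `≥ √(c² + b²)`, and the
sign of `b(z)` is that of `2z - 1` on `(0, 1)`. -/

section InnerProductSpace

variable {E : Type*} [NormedAddCommGroup E] [InnerProductSpace ℝ E]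

lemma inner_sub_right_self_of_norm_eq {x p : E} (h : ‖x‖ = ‖p‖) :
    ⟪x - p, p⟫ = -(‖x - p‖ ^ 2 / 2) := by
  rw [norm_sub_sq_real, inner_sub_left, real_inner_self_eq_norm_sq, h]
  ring

lemma inner_inversion_of_norm_eq {x p : E} (h : ‖x‖ = ‖p‖) (hxp : x ≠ p) :
    ⟪(‖x - p‖ ^ 2)⁻¹ • (x - p), p⟫ = -(1 / 2) := by
  have hne : ‖x - p‖ ≠ 0 := norm_ne_zero_iff.2 (sub_ne_zero.2 hxp)
  rw [real_inner_smul_left, inner_sub_right_self_of_norm_eq h]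
  field_simp

variable {p : E} (hp : ‖p‖ = 1)
include hp

lemma inner_sub_sub_smul_of_inner_eq {u w : E} (h : ⟪u, p⟫ = ⟪w, p⟫) (b : ℝ) :
    ⟪u - (w - b • p), p⟫ = b := by
  rw [inner_sub_left, inner_sub_left, real_inner_smul_left, real_inner_self_eq_norm_sq, hp, h]
  ring

lemma norm_sub_sub_smul_sq_of_inner_eq {u w : E} (h : ⟪u, p⟫ = ⟪w, p⟫) (b : ℝ) :
    ‖u - (w - b • p)‖ ^ 2 = ‖u - w‖ ^ 2 + b ^ 2 := by
  have horth : ⟪u - w, p⟫ = 0 := by rw [inner_sub_left, h, sub_self]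
  rw [show u - (w - b • p) = (u - w) + b • p by abel, norm_add_sq_real, real_inner_smul_right,
    horth, norm_smul, hp, Real.norm_eq_abs, mul_one, sq_abs]
  ring

end InnerProductSpace

lemma abs_inner_inv_norm_smul_le {E : Type*} [NormedAddCommGroup E] [InnerProductSpace ℝ E]
    {v p : E} {c : ℝ} (hc : 0 < c) (hv : c ^ 2 + ⟪v, p⟫ ^ 2 ≤ ‖v‖ ^ 2) :
    |⟪‖v‖⁻¹ • v, p⟫| ≤ |⟪v, p⟫| / √(c ^ 2 + ⟪v, p⟫ ^ 2) := by
  rw [real_inner_smul_left, abs_mul, abs_inv, abs_norm, inv_mul_eq_div]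
  exact div_le_div_of_nonneg_left (abs_nonneg _) (by positivity)
    ((Real.sqrt_le_sqrt hv).trans_eq (Real.sqrt_sq (norm_nonneg v)))

lemma mul_one_sub_nonneg_of_mem_Ioo {z : ℝ} (hz : z ∈ Set.Ioo (0 : ℝ) 1) : 0 ≤ z * (1 - z) :=
  mul_nonneg hz.1.le (sub_nonneg.2 hz.2.le)

theorem boundary_canonical_family_hemisphere_general
    (p : EuclideanSpace ℝ (Fin 4)) (hp : ‖p‖ = 1)
    (z : ℝ) (hz : z ∈ Set.Ioo (0:ℝ) 1)
    (γ₁ γ₂ : ℝ → EuclideanSpace ℝ (Fin 4))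
    (hS₁ : ∀ s, ‖γ₁ s‖ = 1) (hS₂ : ∀ t, ‖γ₂ t‖ = 1)
    (hp₁ : ∀ s, γ₁ s ≠ p) (hp₂ : ∀ t, γ₂ t ≠ p)
    (F : EuclideanSpace ℝ (Fin 4) → EuclideanSpace ℝ (Fin 4))
    (hF : ∀ x, F x = (‖x - p‖ ^ 2)⁻¹ • (x - p))
    (c : ℝ) (hc : 0 < c)
    (hsep : ∀ s t, c ^ 2 ≤ ‖F (γ₁ s) - F (γ₂ t)‖ ^ 2)
    (b : ℝ) (hb : b = (2 * z - 1) / (z * (1 - z)))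
    (g : ℝ × ℝ → EuclideanSpace ℝ (Fin 4))
    (hg : ∀ q : ℝ × ℝ, g q =
      ‖F (γ₁ q.1) - (F (γ₂ q.2) - b • p)‖⁻¹ • (F (γ₁ q.1) - (F (γ₂ q.2) - b • p))) :
    ∀ s t,
      |⟪g (s, t), p⟫| ≤ |b| / Real.sqrt (c ^ 2 + b ^ 2) ∧
      (0 ≤ b → 0 ≤ ⟪g (s, t), p⟫) ∧ (b ≤ 0 → ⟪g (s, t), p⟫ ≤ 0) ∧
      (1/2 ≤ z → 0 ≤ ⟪g (s, t), p⟫) ∧ (z ≤ 1/2 → ⟪g (s, t), p⟫ ≤ 0) := by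
  intro s t
  have hF_inner : ∀ x, ‖x‖ = 1 → x ≠ p → ⟪F x, p⟫ = -(1 / 2) := fun x hx hxp => by
    rw [hF]; exact inner_inversion_of_norm_eq (hx.trans hp.symm) hxp
  have hsame : ⟪F (γ₁ s), p⟫ = ⟪F (γ₂ t), p⟫ := by
    rw [hF_inner _ (hS₁ s) (hp₁ s), hF_inner _ (hS₂ t) (hp₂ t)]
  set v := F (γ₁ s) - (F (γ₂ t) - b • p)
  have hvp : ⟪v, p⟫ = b := inner_sub_sub_smul_of_inner_eq hp hsame b
  have hv : c ^ 2 + ⟪v, p⟫ ^ 2 ≤ ‖v‖ ^ 2 := by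
    rw [hvp, norm_sub_sub_smul_sq_of_inner_eq hp hsame b]
    linarith [hsep s t]
  have hgv : g (s, t) = ‖v‖⁻¹ • v := hg (s, t)
  have hgp : ⟪g (s, t), p⟫ = ‖v‖⁻¹ * b := by rw [hgv, real_inner_smul_left, hvp]
  have hb_nonneg (h : 1 / 2 ≤ z) : 0 ≤ b :=
    hb ▸ div_nonneg (by linarith) (mul_one_sub_nonneg_of_mem_Ioo hz)
  have hb_nonpos (h : z ≤ 1 / 2) : b ≤ 0 :=
    hb ▸ div_nonpos_of_nonpos_of_nonneg (by linarith) (mul_one_sub_nonneg_of_mem_Ioo hz)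
  have hpos (h : 0 ≤ b) : 0 ≤ ⟪g (s, t), p⟫ := hgp ▸ mul_nonneg (by positivity) h
  have hneg (h : b ≤ 0) : ⟪g (s, t), p⟫ ≤ 0 := hgp ▸ mul_nonpos_of_nonneg_of_nonpos (by positivity) h
  refine ⟨?_, hpos, hneg, hpos ∘ hb_nonneg, hneg ∘ hb_nonpos⟩
  rw [hgv, ← hvp]
  exact abs_inner_inv_norm_smul_le hc hv

/-- Hemisphere confinement of the boundary canonical family: with
`b(z) = (2z-1)/(z(1-z))`, `F_p(x) = (x-p)/|x-p|²`, `L_{(p,z)}(x) = F_p(x) - b(z)p` and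
`g_{(p,z)}(s,t)` the normalized difference, one has
`|⟨g_{(p,z)}(s,t), p⟩| ≤ |b(z)|/√(c² + b(z)²)`, the sign of `⟨g_{(p,z)}, p⟩` agrees with that
of `b(z)`, and `g_{(p,z)}` lies in the closed hemisphere `{⟨x,p⟩ ≥ 0}` when `z ≥ 1/2`
and in `{⟨x,p⟩ ≤ 0}` when `z ≤ 1/2`. -/
theorem boundary_canonical_family_hemisphere
    (p : EuclideanSpace ℝ (Fin 4)) (hp : ‖p‖ = 1)
    (z : ℝ) (hz : z ∈ Set.Ioo (0:ℝ) 1)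
    (γ₁ γ₂ : ℝ → EuclideanSpace ℝ (Fin 4))
    (hS₁ : ∀ s, ‖γ₁ s‖ = 1) (hS₂ : ∀ t, ‖γ₂ t‖ = 1)
    (hp₁ : ∀ s, γ₁ s ≠ p) (hp₂ : ∀ t, γ₂ t ≠ p)
    (hdisj : ∀ s t, γ₁ s ≠ γ₂ t)
    (F : EuclideanSpace ℝ (Fin 4) → EuclideanSpace ℝ (Fin 4))
    (hF : ∀ x, F x = (‖x - p‖ ^ 2)⁻¹ • (x - p))
    (c : ℝ) (hc : 0 < c)
    (hsep : ∀ s t, c ^ 2 ≤ ‖F (γ₁ s) - F (γ₂ t)‖ ^ 2)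
    (b : ℝ) (hb : b = (2 * z - 1) / (z * (1 - z)))
    (g : ℝ × ℝ → EuclideanSpace ℝ (Fin 4))
    (hg : ∀ q : ℝ × ℝ, g q =
      ‖F (γ₁ q.1) - (F (γ₂ q.2) - b • p)‖⁻¹ • (F (γ₁ q.1) - (F (γ₂ q.2) - b • p))) :
    ∀ s t,
      |⟪g (s, t), p⟫| ≤ |b| / Real.sqrt (c ^ 2 + b ^ 2) ∧
      (0 ≤ b → 0 ≤ ⟪g (s, t), p⟫) ∧ (b ≤ 0 → ⟪g (s, t), p⟫ ≤ 0) ∧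
      (1/2 ≤ z → 0 ≤ ⟪g (s, t), p⟫) ∧ (z ≤ 1/2 → ⟪g (s, t), p⟫ ≤ 0) :=
  boundary_canonical_family_hemisphere_general p hp z hz γ₁ γ₂ hS₁ hS₂ hp₁ hp₂ F hF c hc hsep b hb g
    hg
end
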